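/- In the one-hidden-layer ReLU ANN setting with constant target α, define V_1(φ) = c² − 2αc + Σ_{j=1}^H v_j². Then ⟨(∇V_1)(φ), G(φ)⟩ = 4 L_∞(φ) for every φ ∈ ℝ^{3H+1}. -/

import Mathlib

open MeasureTheory

noncomputable section

/-- weight parameters -/
def wp (H : ℕ) (φ : EuclideanSpace ℝ (Fin (3*H+1))) (j : Fin H) : ℝ := φ ⟨j.1, by omega⟩
/-- bias parameters -/
def bp (H : ℕ) (φ : EuclideanSpace ℝ (Fin (3*H+1))) (j : Fin H) : ℝ := φ ⟨H + j.1, by omega⟩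
/-- outer weight parameters -/
def vp (H : ℕ) (φ : EuclideanSpace ℝ (Fin (3*H+1))) (j : Fin H) : ℝ := φ ⟨2*H + j.1, by omega⟩
/-- output bias -/
def cp (H : ℕ) (φ : EuclideanSpace ℝ (Fin (3*H+1))) : ℝ := φ ⟨3*H, by omega⟩

/-- realization of the one-hidden-layer ReLU network -/
def realization (H : ℕ) (φ : EuclideanSpace ℝ (Fin (3*H+1))) (x : ℝ) : ℝ :=
  cp H φ + ∑ j : Fin H, vp H φ j * max (wp H φ j * x + bp H φ j) 0

/-- risk with constant target α -/
def risk (H : ℕ) (α : ℝ) (φ : EuclideanSpace ℝ (Fin (3*H+1))) : ℝ :=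
  ∫ y in (0:ℝ)..1, (realization H φ y - α)^2

/-- activity interval I_j^φ -/
def actSet (H : ℕ) (φ : EuclideanSpace ℝ (Fin (3*H+1))) (j : Fin H) : Set ℝ :=
  {x | x ∈ Set.Icc (0:ℝ) 1 ∧ 0 < wp H φ j * x + bp H φ j}

/-- generalized gradient G -/
def grad (H : ℕ) (α : ℝ) (φ : EuclideanSpace ℝ (Fin (3*H+1))) :
    EuclideanSpace ℝ (Fin (3*H+1)) := WithLp.toLp 2 fun i =>
  if h : i.1 < H then
    2 * vp H φ ⟨i.1, h⟩ * ∫ x in actSet H φ ⟨i.1, h⟩, x * (realization H φ x - α)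
  else if h2 : i.1 < 2*H then
    2 * vp H φ ⟨i.1 - H, by omega⟩ * ∫ x in actSet H φ ⟨i.1 - H, by omega⟩, (realization H φ x - α)
  else if h3 : i.1 < 3*H then
    2 * ∫ x in (0:ℝ)..1,
      max (wp H φ ⟨i.1 - 2*H, by omega⟩ * x + bp H φ ⟨i.1 - 2*H, by omega⟩) 0 * (realization H φ x - α)
  else 2 * ∫ x in (0:ℝ)..1, (realization H φ x - α)

/-- Lyapunov function V -/
def lyap (H : ℕ) (α : ℝ) (φ : EuclideanSpace ℝ (Fin (3*H+1))) : ℝ :=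
  ‖φ‖^2 + (cp H φ - 2*α)^2

/-! The gradient of `V₁` has only two kinds of nonzero entries: `2 (c - α)` in the `c`-slot and
`2 vⱼ` in the `vⱼ`-slots. Pairing it with `G` therefore gives
`4 ∫₀¹ ((c - α) + ∑ⱼ vⱼ max (wⱼ x + bⱼ) 0) (N(x) - α) dx`, and the first factor is `N(x) - α`. -/

@[fun_prop]
theorem continuous_realization (H : ℕ) (φ : EuclideanSpace ℝ (Fin (3*H+1))) :
    Continuous (realization H φ) := by
  unfold realization; fun_prop

theorem sq_realization_sub (H : ℕ) (α : ℝ) (φ : EuclideanSpace ℝ (Fin (3*H+1))) (x : ℝ) :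
    (realization H φ x - α) ^ 2 = (cp H φ - α) * (realization H φ x - α) +
      ∑ j : Fin H, vp H φ j * (max (wp H φ j * x + bp H φ j) 0 * (realization H φ x - α)) := by
  have h : realization H φ x - α =
      (cp H φ - α) + ∑ j : Fin H, vp H φ j * max (wp H φ j * x + bp H φ j) 0 := by
    unfold realization; ring
  rw [sq]
  nth_rewrite 1 [h]
  simp only [add_mul, Finset.sum_mul, mul_assoc]

theorem risk_eq (H : ℕ) (α : ℝ) (φ : EuclideanSpace ℝ (Fin (3*H+1))) :
    risk H α φ = (cp H φ - α) * (∫ x in (0:ℝ)..1, (realization H φ x - α)) +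
      ∑ j : Fin H, vp H φ j *
        ∫ x in (0:ℝ)..1, max (wp H φ j * x + bp H φ j) 0 * (realization H φ x - α) := by
  unfold risk
  simp_rw [sq_realization_sub]
  rw [intervalIntegral.integral_add, intervalIntegral.integral_finsetSum,
    intervalIntegral.integral_const_mul]
  · simp_rw [intervalIntegral.integral_const_mul]
  all_goals intros; exact Continuous.intervalIntegrable (by fun_prop) _ _

theorem cp_grad (H : ℕ) (α : ℝ) (φ : EuclideanSpace ℝ (Fin (3*H+1))) :
    cp H (grad H α φ) = 2 * ∫ x in (0:ℝ)..1, (realization H φ x - α) := by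
  simp only [cp, grad]
  rw [dif_neg (by omega), dif_neg (by omega), dif_neg (by omega)]

theorem vp_grad (H : ℕ) (α : ℝ) (φ : EuclideanSpace ℝ (Fin (3*H+1))) (j : Fin H) :
    vp H (grad H α φ) j =
      2 * ∫ x in (0:ℝ)..1, max (wp H φ j * x + bp H φ j) 0 * (realization H φ x - α) := by
  simp only [vp, grad]
  rw [dif_neg (by omega), dif_neg (by omega), dif_pos (by omega)]
  simp

def lyap₁ (H : ℕ) (α : ℝ) (φ : EuclideanSpace ℝ (Fin (3*H+1))) : ℝ :=
  cp H φ ^ 2 - 2 * α * cp H φ + ∑ j : Fin H, vp H φ j ^ 2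

theorem hasFDerivAt_cp (H : ℕ) (φ : EuclideanSpace ℝ (Fin (3*H+1))) :
    HasFDerivAt (cp H) (EuclideanSpace.proj (𝕜 := ℝ) (⟨3*H, by omega⟩ : Fin (3*H+1))) φ :=
  (EuclideanSpace.proj (𝕜 := ℝ) (⟨3*H, by omega⟩ : Fin (3*H+1))).hasFDerivAt

theorem hasFDerivAt_vp (H : ℕ) (φ : EuclideanSpace ℝ (Fin (3*H+1))) (j : Fin H) :
    HasFDerivAt (vp H · j) (EuclideanSpace.proj (𝕜 := ℝ) (⟨2*H + j, by omega⟩ : Fin (3*H+1))) φ :=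
  (EuclideanSpace.proj (𝕜 := ℝ) (⟨2*H + j, by omega⟩ : Fin (3*H+1))).hasFDerivAt

theorem fderiv_lyap₁_apply (H : ℕ) (α : ℝ) (φ u : EuclideanSpace ℝ (Fin (3*H+1))) :
    fderiv ℝ (lyap₁ H α) φ u =
      2 * (cp H φ - α) * cp H u + ∑ j : Fin H, 2 * vp H φ j * vp H u j := by
  have h : HasFDerivAt (lyap₁ H α) _ φ :=
    (((hasFDerivAt_cp H φ).pow 2).sub ((hasFDerivAt_cp H φ).const_mul (2 * α))).add
    (HasFDerivAt.fun_sum (u := Finset.univ) fun j _ => (hasFDerivAt_vp H φ j).pow 2)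
  rw [h.fderiv]
  simp only [cp, vp, add_apply, sub_apply, smul_apply, sum_apply, PiLp.proj_apply, smul_eq_mul,
    nsmul_eq_mul, Nat.add_one_sub_one, pow_one, Nat.cast_ofNat]
  ring

theorem inner_gradV1_grad_eq_general (H : ℕ) (α : ℝ)
    (V1 : EuclideanSpace ℝ (Fin (3*H+1)) → ℝ)
    (hV1 : ∀ φ, V1 φ = (cp H φ)^2 - 2 * α * cp H φ + ∑ j : Fin H, (vp H φ j)^2)
    (φ : EuclideanSpace ℝ (Fin (3*H+1))) :
    (inner ℝ (gradient V1 φ) (grad H α φ) : ℝ) = 4 * risk H α φ := by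
  obtain rfl : V1 = lyap₁ H α := funext hV1
  rw [inner_gradient_left, fderiv_lyap₁_apply, cp_grad, risk_eq, mul_add, Finset.mul_sum]
  simp_rw [vp_grad]
  ring_nf

theorem inner_gradV1_grad_eq (H : ℕ) (hH : 0 < H) (α : ℝ)
    (V1 : EuclideanSpace ℝ (Fin (3*H+1)) → ℝ)
    (hV1 : ∀ φ, V1 φ = (cp H φ)^2 - 2 * α * cp H φ + ∑ j : Fin H, (vp H φ j)^2)
    (φ : EuclideanSpace ℝ (Fin (3*H+1))) :
    (inner ℝ (gradient V1 φ) (grad H α φ) : ℝ) = 4 * risk H α φ :=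
  inner_gradV1_grad_eq_general H α V1 hV1 φ
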